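/- arXiv:math/0404059 — 3 statements merged into one kernel-verified Lean document; each statement's English description precedes it below -/
import Mathlib

section
/- Let G be a group, g ∈ G a central element, χ : G → k* a character with d = order of χ(g) finite and d > 1, and σ : G × G → k* a 2-cocycle. Assume k contains all roots of unity (characteristic zero with all primitive roots of unity). Then for every h ∈ G: ∏_{i=0}^{d-1} ( σ(g, gⁱh) − χ(gⁱh) σ(gⁱh, g) ) = σ(g,g)·σ(g,g²)···σ(g,g^{d-1}) · ( σ(g^d, h) − χ(h)^d σ(h, g^d) ). -/
/-!
With `β = σ(g,h) / σ(h,g)`, centrality of `g` gives `σ(g, gⁱh) = β σ(gⁱh, g)` for every `i` and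
`σ(g^d, h) = β^d σ(h, g^d)`, because `(x, y) ↦ σ(x,y) / σ(y,x)` is multiplicative in each
variable on commuting pairs and trivial on `(x, xⁱ)`. So the `i`-th factor is
`σ(g, gⁱh) (1 - ζⁱ b)` with `ζ = χ(g)` a primitive `d`-th root of unity and `b = χ(h) / β`,
and `∏ᵢ (1 - ζⁱ b) = 1 - b^d`. The cocycle identity telescopes
`∏_{i<d} σ(g, gⁱh) = σ(g,1) σ(g,g) ⋯ σ(g,g^{d-1}) σ(g^d, h)`, and `σ(g,1) = 1`.
-/

open Finset

open Polynomial in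
theorem IsPrimitiveRoot.prod_range_one_sub_pow_mul {R : Type*} [CommRing R] [IsDomain R]
    {ζ : R} {n : ℕ} (hζ : IsPrimitiveRoot ζ n) (hn : 0 < n) (b : R) :
    ∏ i ∈ range n, (1 - ζ ^ i * b) = 1 - b ^ n := by
  simpa [eval_prod] using (congrArg (eval 1) (X_pow_sub_C_eq_prod hζ hn rfl (α := b))).symm

section

variable {G M : Type*} [CommGroup M]

def commPairing (σ : G → G → M) (x y : G) : M := σ x y / σ y x

theorem commPairing_swap (σ : G → G → M) (x y : G) :
    commPairing σ y x = (commPairing σ x y)⁻¹ :=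
  (inv_div _ _).symm

theorem div_commPairing (σ : G → G → M) (x y : G) : σ x y / commPairing σ x y = σ y x :=
  div_div_cancel _ _

variable [Group G]

def IsTwoCocycle (σ : G → G → M) : Prop :=
  ∀ a b c : G, σ a b * σ (a * b) c = σ b c * σ a (b * c)

namespace IsTwoCocycle

variable {σ : G → G → M}

theorem apply_one_right (hσ : IsTwoCocycle σ) (a : G) : σ a 1 = σ 1 1 := by
  simpa using hσ a 1 1

theorem apply_one_left (hσ : IsTwoCocycle σ) (a : G) : σ 1 a = σ 1 1 := by
  simpa using (hσ 1 1 a).symm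

theorem commPairing_one_right (hσ : IsTwoCocycle σ) (x : G) : commPairing σ x 1 = 1 := by
  rw [commPairing, hσ.apply_one_right x, hσ.apply_one_left x, div_self']

theorem commPairing_mul_right (hσ : IsTwoCocycle σ) {x y z : G} (hxy : Commute x y)
    (hxz : Commute x z) :
    commPairing σ x (y * z) = commPairing σ x y * commPairing σ x z := by
  have hx_yz : σ x (y * z) = σ x y * σ (x * y) z / σ y z := by
    rw [hσ x y z, mul_div_cancel_left]
  have hyz_x : σ (y * z) x = σ z x * σ y (x * z) / σ y z := by
    rw [hxz.eq, ← hσ y z x, mul_div_cancel_left]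
  have hxy_z : σ (x * y) z = σ x z * σ y (x * z) / σ y x := by
    rw [hxy.eq, ← hσ y x z, mul_div_cancel_left]
  simp only [commPairing]
  rw [hx_yz, hyz_x, hxy_z]
  apply Additive.ofMul.injective
  simp only [ofMul_mul, ofMul_div]
  abel

theorem commPairing_pow_right (hσ : IsTwoCocycle σ) {x y : G} (hxy : Commute x y) (n : ℕ) :
    commPairing σ x (y ^ n) = commPairing σ x y ^ n := by
  induction n with
  | zero => simpa using hσ.commPairing_one_right x
  | succ n ih =>
    rw [pow_succ, hσ.commPairing_mul_right (hxy.pow_right n) hxy, ih, pow_succ]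

theorem commPairing_pow_left (hσ : IsTwoCocycle σ) {x y : G} (hxy : Commute x y) (n : ℕ) :
    commPairing σ (x ^ n) y = commPairing σ x y ^ n := by
  rw [commPairing_swap, hσ.commPairing_pow_right hxy.symm, commPairing_swap, inv_pow, inv_inv]

theorem commPairing_pow_mul (hσ : IsTwoCocycle σ) {x y : G} (hxy : Commute x y) (n : ℕ) :
    commPairing σ x (x ^ n * y) = commPairing σ x y := by
  rw [hσ.commPairing_mul_right ((Commute.refl x).pow_right n) hxy,
    hσ.commPairing_pow_right (Commute.refl x), commPairing, div_self', one_pow, one_mul]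

theorem prod_range_apply_pow_mul (hσ : IsTwoCocycle σ) (hσl : ∀ a, σ 1 a = 1) (x y : G)
    (n : ℕ) :
    ∏ i ∈ range n, σ x (x ^ i * y) = (∏ i ∈ range n, σ x (x ^ i)) * σ (x ^ n) y := by
  induction n with
  | zero => simp [hσl]
  | succ n ih =>
    rw [prod_range_succ, ih, prod_range_succ, mul_assoc, ← hσ, pow_succ', mul_assoc]

end IsTwoCocycle

end

theorem cocycle_product_identity_general {G : Type*} [Group G] {k : Type*} [Field k]
    (g : G) (hg : g ∈ Subgroup.center G)
    (χ : G →* kˣ)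
    (σ : G → G → kˣ)
    (hσ : ∀ a b c : G, σ a b * σ (a * b) c = σ b c * σ a (b * c))
    (hσr : ∀ a : G, σ a 1 = 1) (hσl : ∀ a : G, σ 1 a = 1)
    (d : ℕ) (hd : d = orderOf (χ g)) (hd1 : 1 < d)
    (h : G) :
    ∏ i ∈ Finset.range d,
        ((σ g (g ^ i * h) : k) - (χ (g ^ i * h) : kˣ) * (σ (g ^ i * h) g : k)) =
      (∏ i ∈ Finset.range (d - 1), ((σ g (g ^ (i + 1)) : kˣ) : k)) *
        ((σ (g ^ d) h : k) - ((χ h : kˣ) : k) ^ d * (σ h (g ^ d) : k)) := by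
  have hσ : IsTwoCocycle σ := hσ
  have hgh : Commute g h := (Subgroup.mem_center_iff.mp hg h).symm
  have hζ : IsPrimitiveRoot (χ g : k) d :=
    IsPrimitiveRoot.coe_units_iff.mpr (hd ▸ IsPrimitiveRoot.orderOf (χ g))
  have hfactor : ∀ i : ℕ,
      (σ g (g ^ i * h) : k) - (χ (g ^ i * h) : kˣ) * (σ (g ^ i * h) g : k) =
        σ g (g ^ i * h) * (1 - (χ g : k) ^ i * ((χ h : k) / commPairing σ g h)) := by
    intro i
    rw [← div_commPairing σ g, hσ.commPairing_pow_mul hgh, map_mul, map_pow]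
    push_cast
    ring
  have hQ : ∏ i ∈ range (d - 1), ((σ g (g ^ (i + 1)) : kˣ) : k) =
      ∏ i ∈ range d, (σ g (g ^ i) : k) := by
    conv_rhs => rw [← Nat.sub_add_cancel hd1.le]
    rw [prod_range_succ', pow_zero, hσr, Units.val_one, mul_one]
  rw [prod_congr rfl fun i _ => hfactor i, prod_mul_distrib,
    hζ.prod_range_one_sub_pow_mul (by omega), ← Units.coe_prod,
    hσ.prod_range_apply_pow_mul hσl, hQ, ← div_commPairing σ (g ^ d),
    hσ.commPairing_pow_left hgh]
  push_cast
  ring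

/-- Lemma 2.7: For a 2-cocycle σ on G with values in kˣ, a central
element g, a character χ with d = o(χ(g)) > 1, and any h ∈ G:
∏_{i=0}^{d-1} (σ(g,gⁱh) − χ(gⁱh)σ(gⁱh,g))
  = σ(g,g)···σ(g,g^{d-1}) · (σ(g^d,h) − χ(h)^d σ(h,g^d)). -/
theorem cocycle_product_identity {G : Type*} [Group G] {k : Type*} [Field k]
    [CharZero k] (hk : ∀ n : ℕ, 0 < n → ∃ ζ : k, IsPrimitiveRoot ζ n)
    (g : G) (hg : g ∈ Subgroup.center G)
    (χ : G →* kˣ)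
    (σ : G → G → kˣ)
    (hσ : ∀ a b c : G, σ a b * σ (a * b) c = σ b c * σ a (b * c))
    (hσr : ∀ a : G, σ a 1 = 1) (hσl : ∀ a : G, σ 1 a = 1)
    (d : ℕ) (hd : d = orderOf (χ g)) (hd1 : 1 < d)
    (h : G) :
    ∏ i ∈ Finset.range d,
        ((σ g (g ^ i * h) : k) - (χ (g ^ i * h) : kˣ) * (σ (g ^ i * h) g : k)) =
      (∏ i ∈ Finset.range (d - 1), ((σ g (g ^ (i + 1)) : kˣ) : k)) *
        ((σ (g ^ d) h : k) - ((χ h : kˣ) : k) ^ d * (σ h (g ^ d) : k)) :=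
  cocycle_product_identity_general g hg χ σ hσ hσr hσl d hd hd1 h
end

section
/- Let G₁, G₂ be groups and σ ∈ Z²(G₁ × G₂, k*) a normalized 2-cocycle. Define B_σ : G₁ × G₂ → k* by B_σ(g₁,g₂) = σ((g₁,1),(1,g₂))·σ((1,g₂),(g₁,1))⁻¹. Then B_σ is a pairing, and the map σ ↦ (σ|_{G₁×G₁}, σ|_{G₂×G₂}, B_σ) is a group homomorphism from Z²(G₁×G₂,k*) to Z²(G₁,k*) × Z²(G₂,k*) × P(G₁×G₂,k*), where restrictions are via the canonical embeddings and P denotes the group of pairings under pointwise multiplication. -/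
private lemma aux_cg {M : Type*} [CommGroup M] (p q r s t m n u v : M)
    (h1 : p * q = r * s) (h2 : t * m = n * s) (h3 : u * m = p * v) :
    q * v⁻¹ = t * u⁻¹ * (r * n⁻¹) := by
  have e1 : q * u * n * s = v * (t * r) * s := by
    calc q * u * n * s = q * u * (n * s) := by rw [mul_assoc]
      _ = q * u * (t * m) := by rw [← h2]
      _ = q * t * (u * m) := by
          simp only [mul_comm, mul_assoc, mul_left_comm]
      _ = q * t * (p * v) := by rw [h3]
      _ = t * v * (p * q) := by
          simp only [mul_comm, mul_assoc, mul_left_comm]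
      _ = t * v * (r * s) := by rw [h1]
      _ = v * (t * r) * s := by
          simp only [mul_comm, mul_assoc, mul_left_comm]
  have key : q * (u * n) = v * (t * r) := by
    have := mul_right_cancel e1
    simpa [mul_assoc] using this
  rw [← div_eq_mul_inv, ← div_eq_mul_inv, ← div_eq_mul_inv, div_mul_div_comm,
    div_eq_div_iff_mul_eq_mul]
  rw [key]; exact mul_comm _ _

/-- For a normalized 2-cocycle σ on G₁ × G₂, the map
B_σ(g₁,g₂) = σ((g₁,1),(1,g₂))·σ((1,g₂),(g₁,1))⁻¹ is a pairing, and
σ ↦ (σ|_{G₁×G₁}, σ|_{G₂×G₂}, B_σ) is multiplicative for pointwise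
multiplication of cocycles. -/
theorem restriction_pairing_hom {G₁ G₂ : Type*} [Group G₁] [Group G₂]
    {k : Type*} [Field k] :
    let IsCocycle : ((G₁ × G₂) → (G₁ × G₂) → kˣ) → Prop := fun σ =>
      (∀ p q r : G₁ × G₂, σ p q * σ (p * q) r = σ q r * σ p (q * r)) ∧
      (∀ p : G₁ × G₂, σ p 1 = 1) ∧ (∀ p : G₁ × G₂, σ 1 p = 1)
    let Bmap : ((G₁ × G₂) → (G₁ × G₂) → kˣ) → G₁ → G₂ → kˣ := fun σ g₁ g₂ =>
      σ (g₁, 1) (1, g₂) * (σ (1, g₂) (g₁, 1))⁻¹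
    -- B_σ is a pairing
    (∀ σ, IsCocycle σ →
      (∀ a a' : G₁, ∀ b : G₂, Bmap σ (a * a') b = Bmap σ a b * Bmap σ a' b) ∧
      (∀ a : G₁, ∀ b b' : G₂, Bmap σ a (b * b') = Bmap σ a b * Bmap σ a b')) ∧
    -- the triple map is a group homomorphism (multiplicativity componentwise)
    (∀ σ τ, IsCocycle σ → IsCocycle τ →
      (∀ a b : G₁, (σ * τ) (a, (1 : G₂)) (b, (1 : G₂)) =
        σ (a, 1) (b, 1) * τ (a, 1) (b, 1)) ∧
      (∀ a b : G₂, (σ * τ) ((1 : G₁), a) ((1 : G₁), b) =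
        σ (1, a) (1, b) * τ (1, a) (1, b)) ∧
      (∀ g₁ : G₁, ∀ g₂ : G₂, Bmap (σ * τ) g₁ g₂ = Bmap σ g₁ g₂ * Bmap τ g₁ g₂)) := by
  intro IsCocycle Bmap
  constructor
  · intro σ hσ
    constructor
    · intro a a' b
      have h1 := hσ.1 (a, 1) (a', 1) (1, b)
      have h2 := hσ.1 (a, 1) (1, b) (a', 1)
      have h3 := hσ.1 (1, b) (a, 1) (a', 1)
      simp only [Prod.mk_mul_mk, mul_one, one_mul] at h1 h2 h3
      simp only [Bmap]
      exact aux_cg _ _ _ _ _ _ _ _ _ h1 h2 h3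
    · intro a b b'
      have h1 := hσ.1 (1, b) (1, b') (a, 1)
      have h2 := hσ.1 (1, b) (a, 1) (1, b')
      have h3 := hσ.1 (a, 1) (1, b) (1, b')
      simp only [Prod.mk_mul_mk, mul_one, one_mul] at h1 h2 h3
      have h := aux_cg _ _ _ _ _ _ _ _ _ h1 h2 h3
      have h' := congrArg (·⁻¹) h
      simp only [Bmap]
      simpa [mul_inv, inv_inv, mul_comm, mul_assoc, mul_left_comm] using h'
  · intro σ τ _ _
    refine ⟨fun a b => rfl, fun a b => rfl, fun g₁ g₂ => ?_⟩
    simp only [Bmap, Pi.mul_apply, mul_inv]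
    exact mul_mul_mul_comm _ _ _ _
end

section
/- Let G₁ × G₂ be a direct product of groups and σ a normalized 2-cocycle on G₁ × G₂ with values in k* such that σ restricted to G₁ and to G₂ is identically 1 and the pairing B_σ(g₁,g₂)=σ((g₁,1),(1,g₂))σ((1,g₂),(g₁,1))⁻¹ is identically 1. Define s : G₁ × G₂ → k* by s(g₁,g₂) = σ((g₁,1),(1,g₂))⁻¹. Then σ = ∂s, i.e. σ is the coboundary of s; moreover s(1,1) = 1. -/
/-- If a normalized 2-cocycle σ on G₁ × G₂ is identically 1 when
restricted to each factor and has trivial pairing B_σ, then σ = ∂s for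
s(g₁,g₂) = σ((g₁,1),(1,g₂))⁻¹, and s(1,1) = 1. -/
theorem trivial_restrictions_coboundary {G₁ G₂ : Type*} [Group G₁] [Group G₂]
    {k : Type*} [Field k] (σ : (G₁ × G₂) → (G₁ × G₂) → kˣ)
    (hσ : ∀ p q r : G₁ × G₂, σ p q * σ (p * q) r = σ q r * σ p (q * r))
    (hσr : ∀ p : G₁ × G₂, σ p 1 = 1) (hσl : ∀ p : G₁ × G₂, σ 1 p = 1)
    (h1 : ∀ a b : G₁, σ (a, (1 : G₂)) (b, (1 : G₂)) = 1)
    (h2 : ∀ a b : G₂, σ ((1 : G₁), a) ((1 : G₁), b) = 1)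
    (hB : ∀ g₁ : G₁, ∀ g₂ : G₂, σ (g₁, 1) (1, g₂) * (σ (1, g₂) (g₁, 1))⁻¹ = 1) :
    let s : G₁ × G₂ → kˣ := fun p => (σ (p.1, 1) (1, p.2))⁻¹
    (∀ p q : G₁ × G₂, σ p q = s p * s q * (s (p * q))⁻¹) ∧ s 1 = 1 := by
  intro s
  have hBeq : ∀ (g₁ : G₁) (g₂ : G₂), σ ((1 : G₁), g₂) (g₁, (1 : G₂)) = σ (g₁, 1) (1, g₂) := by
    intro g₁ g₂
    have := hB g₁ g₂
    rw [mul_inv_eq_one] at this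
    exact this.symm
  constructor
  · rintro ⟨a, x⟩ ⟨b, y⟩
    simp only [s, Prod.mk_mul_mk]
    -- e1 : σ (a,1) (b,1) * σ (a*b,1) (1,x) = σ (b,1) (1,x) * σ (a,1) (b,x)
    have e1 := hσ (a, (1 : G₂)) (b, (1 : G₂)) ((1 : G₁), x)
    simp only [Prod.mk_mul_mk, mul_one, one_mul, h1] at e1
    -- e2 : σ (a,1) (1,x) * σ (a,x) (b,1) = σ (1,x) (b,1) * σ (a,1) (b,x)
    have e2 := hσ (a, (1 : G₂)) ((1 : G₁), x) (b, (1 : G₂))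
    simp only [Prod.mk_mul_mk, mul_one, one_mul, hBeq] at e2
    -- so e2 : σ (a,1) (1,x) * σ (a,x) (b,1) = σ (b,1) (1,x) * σ (a,1) (b,x) = σ(a*b,1)(1,x)
    rw [← e1] at e2
    -- e4 : σ (a*b,1) (1,x) * σ (a*b,x) (1,y) = σ (a*b,1) (1,x*y)
    have e4 := hσ (a * b, (1 : G₂)) ((1 : G₁), x) ((1 : G₁), y)
    simp only [Prod.mk_mul_mk, mul_one, one_mul, h2] at e4
    
    -- e3 : σ (a,x) (b,1) * σ (a*b,x) (1,y) = σ (b,1) (1,y) * σ (a,x) (b,y)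
    have e3 := hσ (a, x) (b, (1 : G₂)) ((1 : G₁), y)
    simp only [Prod.mk_mul_mk, mul_one, one_mul] at e3
    -- Combine: σ(a,x)(b,1) = A⁻¹ * D, σ(a*b,x)(1,y) = D⁻¹ * C
    have hU : σ (a, x) (b, (1 : G₂)) = (σ (a, 1) (1, x))⁻¹ * σ (a * b, 1) (1, x) := by
      rw [← e2]; group
    have hV : σ (a * b, x) ((1 : G₁), y) = (σ (a * b, 1) (1, x))⁻¹ * σ (a * b, 1) (1, x * y) := by
      rw [← e4]; group
    rw [hU, hV] at e3
    have : σ (a, x) (b, y) = (σ (b, 1) (1, y))⁻¹ *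
        ((σ (a, 1) (1, x))⁻¹ * σ (a * b, 1) (1, x) *
          ((σ (a * b, 1) (1, x))⁻¹ * σ (a * b, 1) (1, x * y))) := by
      rw [e3]; group
    rw [mul_assoc, mul_inv_cancel_left] at this
    rw [inv_inv, mul_assoc, this, mul_left_comm]
  · simp only [s]
    have : ((1 : G₁ × G₂).1, (1 : G₂)) = (1 : G₁ × G₂) := rfl
    rw [this]
    have : ((1 : G₁), (1 : G₁ × G₂).2) = (1 : G₁ × G₂) := rfl
    rw [this, hσl, inv_one]
end
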